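/- Limit relation defining the q-Krawtchouk polynomial: for nonnegative integers n ≤ N and 0 ≤ x ≤ N, lim_{a→∞} (aq)^{−n} h_n(x; a, b, N; q) = (q^{−N};q)_n (−1)^n q^{binom(n,2)} ∑_{j=0}^{n} (q^{−n};q)_j (q^{−x};q)_j (bq^{n+1})^j / ((q^{−N};q)_j (q;q)_j), where h_n(x; a, b, N; q) = (aq;q)_n (q^{−N};q)_n ∑_{j=0}^{n} (q^{−n};q)_j (abq^{n+1};q)_j (q^{−x};q)_j q^j / ((aq;q)_j (q^{−N};q)_j (q;q)_j) is the q-Hahn polynomial. -/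

import Mathlib

/-! Dividing by `(a q)^n`, the `j`-th term of `h_n` factors as `(a q)^{-n} (a q; q)_n`, which tends
to `(-1)^n q^{binom(n,2)}` because `(1 - a q^{i+1}) / (a q) → -q^i`, times
`(a b q^{n+1}; q)_j / (a q; q)_j`, which tends to `(b q^n)^j` factor by factor. The sum over `j`
is finite, so the limit passes through it. -/

open Finset Filter

noncomputable def qPoch (q a : ℝ) (n : ℕ) : ℝ := ∏ i ∈ Finset.range n, (1 - a * q ^ i)

/-- The q-Hahn polynomials `h_n(x; a, b, N; q)`. -/
noncomputable def qHahn (q a b : ℝ) (N : ℤ) (n : ℕ) (x : ℤ) : ℝ :=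
  qPoch q (a * q) n * qPoch q (q ^ (-N)) n *
    ∑ j ∈ Finset.range (n + 1),
      (qPoch q (q ^ (-(n : ℤ))) j * qPoch q (a * b * q ^ ((n : ℤ) + 1)) j *
          qPoch q (q ^ (-x)) j) * q ^ j /
        (qPoch q (a * q) j * qPoch q (q ^ (-N)) j * qPoch q q j)

open Topology

lemma tendsto_one_sub_mul_div_one_sub_mul (c : ℝ) {d : ℝ} (hd : d ≠ 0) :
    Tendsto (fun a : ℝ => (1 - a * c) / (1 - a * d)) atTop (𝓝 (c / d)) := by
  have h := (tendsto_inv_atTop_zero.sub_const c).div (tendsto_inv_atTop_zero.sub_const d)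
    (by simpa using hd)
  rw [zero_sub, zero_sub, neg_div_neg_eq] at h
  refine h.congr' ?_
  filter_upwards [eventually_ne_atTop 0] with a ha
  rw [Pi.div_apply, ← mul_div_mul_left _ _ ha, mul_sub, mul_sub, mul_inv_cancel₀ ha]

lemma tendsto_qPoch_mul_div_qPoch_mul {q : ℝ} (hq : q ≠ 0) (c : ℝ) {d : ℝ} (hd : d ≠ 0)
    (j : ℕ) :
    Tendsto (fun a : ℝ => qPoch q (a * c) j / qPoch q (a * d) j) atTop (𝓝 ((c / d) ^ j)) := by
  have h := tendsto_finsetProd (range j) fun i _ =>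
    tendsto_one_sub_mul_div_one_sub_mul (c * q ^ i) (mul_ne_zero hd (pow_ne_zero i hq))
  simp only [mul_div_mul_right c d (pow_ne_zero _ hq), prod_const, card_range] at h
  simpa only [qPoch, ← prod_div_distrib, mul_assoc] using h

lemma prod_range_neg_pow (q : ℝ) (n : ℕ) :
    ∏ i ∈ range n, -q ^ i = (-1) ^ n * q ^ n.choose 2 := by
  rw [prod_neg, card_range, prod_pow_eq_pow_sum, sum_range_id, Nat.choose_two_right]

lemma tendsto_zpow_neg_mul_qPoch (q : ℝ) (n : ℕ) :
    Tendsto (fun t : ℝ => t ^ (-(n : ℤ)) * qPoch q t n) atTop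
      (𝓝 ((-1) ^ n * q ^ n.choose 2)) := by
  have h := tendsto_finsetProd (range n) fun i _ =>
    (tendsto_inv_atTop_zero (𝕜 := ℝ)).sub_const (q ^ i)
  simp only [zero_sub, prod_range_neg_pow] at h
  refine h.congr' ?_
  filter_upwards [eventually_ne_atTop 0] with t ht
  have hpow : t⁻¹ ^ n = ∏ _i ∈ range n, t⁻¹ := by simp
  rw [qPoch, zpow_neg, zpow_natCast, ← inv_pow, hpow, ← prod_mul_distrib]
  refine prod_congr rfl fun i _ => ?_
  rw [mul_sub, mul_one, ← mul_assoc, inv_mul_cancel₀ ht, one_mul]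

theorem qKrawtchouk_limit_general (q b : ℝ) (N n x : ℕ)
    (hq0 : 0 < q) :
    Filter.Tendsto (fun a : ℝ => (a * q) ^ (-(n : ℤ)) * qHahn q a b (N : ℤ) n (x : ℤ))
      Filter.atTop
      (nhds (qPoch q (q ^ (-(N : ℤ))) n * (-1) ^ n * q ^ Nat.choose n 2 *
        ∑ j ∈ Finset.range (n + 1),
          qPoch q (q ^ (-(n : ℤ))) j * qPoch q (q ^ (-(x : ℤ))) j *
              (b * q ^ ((n : ℤ) + 1)) ^ j /
            (qPoch q (q ^ (-(N : ℤ))) j * qPoch q q j))) := by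
  set c := b * q ^ ((n : ℤ) + 1)
  set coeff : ℕ → ℝ := fun j =>
    qPoch q (q ^ (-(n : ℤ))) j * qPoch q (q ^ (-(x : ℤ))) j * q ^ j /
      (qPoch q (q ^ (-(N : ℤ))) j * qPoch q q j)
  have hlead := (tendsto_zpow_neg_mul_qPoch q n).comp (tendsto_id.atTop_mul_const hq0)
  have hterm (j : ℕ) := ((hlead.const_mul (qPoch q (q ^ (-(N : ℤ))) n)).mul
    ((tendsto_qPoch_mul_div_qPoch_mul hq0.ne' c hq0.ne' j).const_mul (coeff j)))
  convert tendsto_finsetSum (range (n + 1)) fun j _ => hterm j using 1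
  · ext a
    simp only [qHahn, mul_sum, Function.comp_apply, id, coeff, c, mul_assoc a b]
    refine sum_congr rfl fun j _ => ?_
    ring
  · rw [mul_sum]
    refine congrArg 𝓝 (sum_congr rfl fun j _ => ?_)
    simp only [coeff, div_pow]
    field_simp

/-- The q-Krawtchouk polynomial as the limit `lim_{a→∞} (aq)^{-n} h_n(x;a,b,N;q)`. -/
theorem qKrawtchouk_limit (q b : ℝ) (N n x : ℕ) (hn : n ≤ N) (hx : x ≤ N)
    (hq0 : 0 < q) (hq1 : q < 1) :
    Filter.Tendsto (fun a : ℝ => (a * q) ^ (-(n : ℤ)) * qHahn q a b (N : ℤ) n (x : ℤ))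
      Filter.atTop
      (nhds (qPoch q (q ^ (-(N : ℤ))) n * (-1) ^ n * q ^ Nat.choose n 2 *
        ∑ j ∈ Finset.range (n + 1),
          qPoch q (q ^ (-(n : ℤ))) j * qPoch q (q ^ (-(x : ℤ))) j *
              (b * q ^ ((n : ℤ) + 1)) ^ j /
            (qPoch q (q ^ (-(N : ℤ))) j * qPoch q q j))) :=
  qKrawtchouk_limit_general q b N n x hq0
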